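/- For every assignment of states (occupied or vacant) to the squares of Λ = {1,…,m} × {1,…,n}, exactly one of the following two events occurs: Λ contains an occupied star connected left-right crossing, or Λ contains a vacant plus connected top-down crossing. -/

import Mathlib

/-!
Existence is Gale's boundary walk, as for the game of Hex. Declare the squares in columns `≤ 0`
occupied and every other square outside `Λ` vacant, and walk along the boundary between occupied
and vacant squares, keeping the occupied ones on the right, starting downwards at the top of the
left wall. The walk is reversible, and run backwards it climbs the left wall forever, so it never
repeats a state. Until its occupied side reaches column `m` or its vacant side reaches row `0` it
stays in a bounded region, so one of the two happens. The occupied squares passed on the right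
form a star connected chain and the vacant squares passed on the left a plus connected chain;
pruning that chain gives the crossing.

Uniqueness is a parity argument. Extend a plus connected top-down crossing `Q` by one square
above and one below. For a square `x` off `Q`, the parity of the number of steps of `Q` crossing
the horizontal half-line running right from `x` is the same for star adjacent squares off `Q`; it
is odd in column `1` and zero in column `m`, so a star connected left-right crossing must meet `Q`.
-/

/-- Star adjacency on squares of the array: share at least a corner. -/
def starAdj (i j : ℤ × ℤ) : Prop := max |i.1 - j.1| |i.2 - j.2| = 1

/-- Plus adjacency on squares of the array: share an edge. -/
def plusAdj (i j : ℤ × ℤ) : Prop := |i.1 - j.1| + |i.2 - j.2| = 1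

/-- Membership in the rectangular array `Λ = {1,…,m} × {1,…,n}`. -/
def inRect (m n : ℤ) (k : ℤ × ℤ) : Prop :=
  1 ≤ k.1 ∧ k.1 ≤ m ∧ 1 ≤ k.2 ∧ k.2 ≤ n

/-- A left-right crossing of `Λ = {1,…,m} × {1,…,n}` with respect to the adjacency
`adj`: a sequence of pairwise distinct squares of `Λ` with consecutive squares
adjacent, whose first square is the unique one with first coordinate `1` and whose
last square is the unique one with first coordinate `m`. -/
def IsLRCrossing (adj : ℤ × ℤ → ℤ × ℤ → Prop) (m n : ℤ) (J : List (ℤ × ℤ)) : Prop :=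
  J ≠ [] ∧ J.Nodup ∧ J.Chain' adj ∧ (∀ k ∈ J, inRect m n k) ∧
  (∀ k ∈ J, (k.1 = 1 ↔ J.head? = some k)) ∧
  (∀ k ∈ J, (k.1 = m ↔ J.getLast? = some k))

/-- A top-down crossing of `Λ = {1,…,m} × {1,…,n}` with respect to the adjacency
`adj`: a sequence of pairwise distinct squares of `Λ` with consecutive squares
adjacent, whose first square is the unique one with second coordinate `n` and whose
last square is the unique one with second coordinate `1`. -/
def IsTDCrossing (adj : ℤ × ℤ → ℤ × ℤ → Prop) (m n : ℤ) (J : List (ℤ × ℤ)) : Prop :=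
  J ≠ [] ∧ J.Nodup ∧ J.Chain' adj ∧ (∀ k ∈ J, inRect m n k) ∧
  (∀ k ∈ J, (k.2 = n ↔ J.head? = some k)) ∧
  (∀ k ∈ J, (k.2 = 1 ↔ J.getLast? = some k))

namespace List

variable {α : Type*} {R : α → α → Prop}

theorem IsChain.rel_of_mem_zip_tail {l : List α} (h : l.IsChain R) {s : α × α}
    (hs : s ∈ l.zip l.tail) : R s.1 s.2 := by
  induction h with
  | nil => simp at hs
  | singleton => simp at hs
  | cons_cons hr _ ih =>
    rcases List.mem_cons.mp hs with rfl | hs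
    · exact hr
    · exact ih hs

theorem IsChain.of_eq_or_of_nodup {l : List α} (h : l.IsChain fun a b => a = b ∨ R a b)
    (hl : l.Nodup) : l.IsChain R := by
  induction h with
  | nil => exact .nil
  | singleton a => exact .singleton a
  | cons_cons hr _ ih =>
    rw [nodup_cons, mem_cons, not_or] at hl
    exact .cons_cons (hr.resolve_left hl.1.1) (ih hl.2)

theorem exists_eq_append_cons_append_cons_of_not_nodup {l : List α} (h : ¬ l.Nodup) :
    ∃ x l₁ l₂ l₃, l = (l₁ ++ x :: l₂) ++ x :: l₃ := by
  obtain ⟨x, hx⟩ := exists_duplicate_iff_not_nodup.mpr h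
  obtain ⟨r₁, r₂, rfl, h₁, h₂⟩ := cons_sublist_iff.mp (duplicate_iff_sublist.mp hx)
  obtain ⟨l₁, l₂, rfl⟩ := append_of_mem h₁
  obtain ⟨l₃, l₄, rfl⟩ := append_of_mem (h₂.subset (mem_singleton_self x))
  exact ⟨x, l₁, l₂ ++ l₃, l₄, by simp⟩

theorem countP_bne_zip_tail_mod_two (f : α → Bool) {l : List α} {a b : α}
    (ha : l.head? = some a) (hb : l.getLast? = some b) :
    ((l.zip l.tail).countP fun s => f s.1 != f s.2) % 2 = (f a != f b).toNat := by
  obtain ⟨t, rfl⟩ := head?_eq_some_iff.mp ha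
  induction t generalizing a with
  | nil => simp_all
  | cons c t ih =>
    rw [getLast?_cons_cons] at hb
    have := ih rfl hb
    simp only [tail_cons, zip_cons_cons, countP_cons] at this ⊢
    generalize countP _ _ = k at this ⊢
    revert this
    cases f a <;> cases f b <;> cases f c <;> simp <;> omega

theorem countP_eq_add_of_disjoint {l : List α} {p q r : α → Bool}
    (h : ∀ x ∈ l, p x ↔ q x ∨ r x) (hqr : ∀ x ∈ l, ¬ (q x ∧ r x)) :
    l.countP p = l.countP q + l.countP r := by
  induction l with
  | nil => rfl
  | cons a t ih =>
    simp only [countP_cons, ih (fun x hx => h x (mem_cons_of_mem a hx))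
      (fun x hx => hqr x (mem_cons_of_mem a hx))]
    have ha := h a mem_cons_self
    have hqra := hqr a mem_cons_self
    revert ha hqra
    cases p a <;> cases q a <;> cases r a <;> simp <;> omega

theorem mem_of_mem_zip_tail {l : List α} {s : α × α} (hs : s ∈ l.zip l.tail) :
    s.1 ∈ l ∧ s.2 ∈ l :=
  ⟨(of_mem_zip hs).1, mem_of_mem_tail (of_mem_zip hs).2⟩

theorem exists_head?_eq_some {l : List α} (h : l ≠ []) : ∃ a, l.head? = some a :=
  Option.ne_none_iff_exists'.mp (mt head?_eq_none_iff.mp h)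

theorem exists_getLast?_eq_some {l : List α} (h : l ≠ []) : ∃ a, l.getLast? = some a :=
  Option.ne_none_iff_exists'.mp (mt getLast?_eq_none_iff.mp h)

end List

section Crossing

variable {α : Type*} (R : α → α → Prop) (proj : α → ℤ) (M : ℤ)

def IsCrossing (J : List α) : Prop :=
  J ≠ [] ∧ J.Nodup ∧ J.IsChain R ∧ (∀ k ∈ J, proj k = 1 ↔ J.head? = some k) ∧
    (∀ k ∈ J, proj k = M ↔ J.getLast? = some k)

variable {R proj M}

-- A shortest such chain is a crossing: a repeated square, or a square of value `1` (resp. `M`)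
-- other than the first (resp. last) one, would let us cut it shorter.
open List in
theorem exists_isCrossing_subset {J : List α} (hne : J ≠ [])
    (hJ : J.IsChain fun a b => a = b ∨ R a b) (hhead : ∀ a ∈ J.head?, proj a = 1)
    (hlast : ∀ b ∈ J.getLast?, proj b = M) : ∃ J', IsCrossing R proj M J' ∧ J' ⊆ J := by
  induction hlen : J.length using Nat.strong_induction_on generalizing J with
  | _ k ih =>
  subst hlen
  have shortcut : ∀ J', J' ≠ [] → (J'.IsChain fun a b => a = b ∨ R a b) →
      (∀ a ∈ J'.head?, proj a = 1) → (∀ b ∈ J'.getLast?, proj b = M) →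
      J'.length < J.length → J' ⊆ J → ∃ J'', IsCrossing R proj M J'' ∧ J'' ⊆ J := by
    intro J' hne' hJ' hhead' hlast' hlt hsub
    obtain ⟨J'', hJ'', hsub'⟩ := ih _ hlt hne' hJ' hhead' hlast' rfl
    exact ⟨J'', hJ'', List.Subset.trans hsub' hsub⟩
  by_cases hnd : J.Nodup
  swap
  · obtain ⟨x, l₁, l₂, l₃, rfl⟩ := exists_eq_append_cons_append_cons_of_not_nodup hnd
    have hpre := isChain_append.mp (hJ.prefix (l₁ := l₁ ++ [x]) ⟨l₂ ++ x :: l₃, by simp⟩)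
    rw [getLast?_append_of_ne_nil _ (cons_ne_nil _ _)] at hlast
    refine shortcut (l₁ ++ x :: l₃) (by simp) ?_ (by simpa using hhead) (by simpa using hlast)
      (by simp) (by intro y; simp; tauto)
    exact isChain_append.mpr ⟨hpre.1, hJ.suffix (suffix_append _ _), hpre.2.2⟩
  by_cases h1 : ∀ k ∈ J, proj k = 1 → J.head? = some k
  swap
  · push Not at h1
    obtain ⟨k, hk, hk1, hkh⟩ := h1
    obtain ⟨s, u, rfl⟩ := append_of_mem hk
    have hs : s ≠ [] := by rintro rfl; simp at hkh
    refine shortcut (k :: u) (by simp) (hJ.suffix (suffix_append _ _)) (by simpa using hk1)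
      (by simpa using hlast) (by simpa using length_pos_iff.mpr hs) (by intro y; simp; tauto)
  by_cases hM : ∀ k ∈ J, proj k = M → J.getLast? = some k
  swap
  · push Not at hM
    obtain ⟨k, hk, hkM, hkl⟩ := hM
    obtain ⟨s, u, rfl⟩ := append_of_mem hk
    have hu : u ≠ [] := by rintro rfl; simp at hkl
    refine shortcut (s ++ [k]) (by simp) (hJ.prefix ?_) (by simpa using hhead)
      (by simpa using hkM) (by simpa using length_pos_iff.mpr hu) (by intro y; simp; tauto)
    exact ⟨u, by simp⟩
  refine ⟨J, ⟨hne, hnd, hJ.of_eq_or_of_nodup hnd, fun k hk => ⟨h1 k hk, fun h => hhead k h⟩,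
    fun k hk => ⟨hM k hk, fun h => hlast k h⟩⟩, Subset.refl J⟩

-- The alternative `K.head? = some a ∧ 1 ≤ proj a` only serves the induction.
open List in
theorem exists_band_chain (hR : ∀ a b, R a b → proj b ≤ proj a + 1) (hM : 1 ≤ M) :
    ∀ (L : List α) (a : α), (a :: L).IsChain (fun a b => a = b ∨ R a b) → proj a ≤ M →
      (∃ x ∈ a :: L, M ≤ proj x) →
      ∃ K, K ≠ [] ∧ K.IsChain (fun a b => a = b ∨ R a b) ∧
        (∀ k ∈ K, k ∈ a :: L ∧ 1 ≤ proj k ∧ proj k ≤ M) ∧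
        ((K.head? = some a ∧ 1 ≤ proj a) ∨ ∀ b ∈ K.head?, proj b = 1) ∧
        ∀ b ∈ K.getLast?, proj b = M := by
  intro L
  induction L with
  | nil =>
    rintro a - haM ⟨x, hx, hxM⟩
    rw [show x = a by simpa using hx] at hxM
    exact ⟨[a], by simp, .singleton a, by simp; omega, by simp; omega, by simp; omega⟩
  | cons b L ih =>
    intro a hchain haM hx
    by_cases hMa : M ≤ proj a
    · exact ⟨[a], by simp, .singleton a, by simp; omega, by simp; omega, by simp; omega⟩
    rw [isChain_cons_cons] at hchain
    have hbM : proj b ≤ M := by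
      rcases hchain.1 with rfl | hab
      · omega
      · have := hR a b hab; omega
    have hx' : ∃ x ∈ b :: L, M ≤ proj x := by
      obtain ⟨x, hx, hxM⟩ := hx
      rcases mem_cons.mp hx with rfl | hx
      · exact absurd hxM hMa
      · exact ⟨x, hx, hxM⟩
    obtain ⟨K, hKne, hK, hKmem, hKhead, hKlast⟩ := ih b hchain.2 hbM hx'
    have hKmem' : ∀ k ∈ K, k ∈ a :: b :: L ∧ 1 ≤ proj k ∧ proj k ≤ M :=
      fun k hk => ⟨mem_cons_of_mem a (hKmem k hk).1, (hKmem k hk).2⟩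
    rcases hKhead with ⟨hKb, hb⟩ | hK1
    · obtain ⟨K', rfl⟩ := head?_eq_some_iff.mp hKb
      by_cases ha : 1 ≤ proj a
      · refine ⟨a :: b :: K', by simp, .cons_cons hchain.1 hK, ?_, by simp [ha],
          by simpa using hKlast⟩
        intro k hk
        rcases mem_cons.mp hk with rfl | hk
        · exact ⟨mem_cons_self, ha, by omega⟩
        · exact hKmem' k hk
      · refine ⟨b :: K', hKne, hK, hKmem', Or.inr ?_, hKlast⟩
        rcases hchain.1 with rfl | hab
        · omega
        · have := hR a b hab; simp; omega
    · exact ⟨K, hKne, hK, hKmem', Or.inr hK1, hKlast⟩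

theorem exists_isCrossing_of_isChain (hR : ∀ a b, R a b → proj b ≤ proj a + 1) (hM : 1 ≤ M)
    {L : List α} {a : α} (hL : L.IsChain fun a b => a = b ∨ R a b) (ha : L.head? = some a)
    (hpa : proj a ≤ 0) (hx : ∃ x ∈ L, M ≤ proj x) :
    ∃ J, IsCrossing R proj M J ∧ ∀ k ∈ J, k ∈ L ∧ 1 ≤ proj k ∧ proj k ≤ M := by
  obtain ⟨L, rfl⟩ := List.head?_eq_some_iff.mp ha
  obtain ⟨K, hKne, hK, hKmem, hKhead, hKlast⟩ :=
    exists_band_chain hR hM L a hL (by omega) hx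
  have hKhead' : ∀ b ∈ K.head?, proj b = 1 := hKhead.resolve_left fun h => by omega
  obtain ⟨J, hJ, hJK⟩ := exists_isCrossing_subset hKne hK hKhead' hKlast
  exact ⟨J, hJ, fun k hk => hKmem k (hJK hk)⟩

end Crossing

section RayCrossings

theorem plusAdj_iff {a b : ℤ × ℤ} : plusAdj a b ↔
    a.1 = b.1 ∧ (a.2 = b.2 + 1 ∨ b.2 = a.2 + 1) ∨ a.2 = b.2 ∧ (a.1 = b.1 + 1 ∨ b.1 = a.1 + 1) := by
  unfold plusAdj
  rcases abs_cases (a.1 - b.1) with ⟨h1, _⟩ | ⟨h1, _⟩ <;>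
    rcases abs_cases (a.2 - b.2) with ⟨h2, _⟩ | ⟨h2, _⟩ <;> rw [h1, h2] <;> omega

-- the steps of `Q` crossing the horizontal half-line from the top right corner of `x` to the right
def rayCrossings (Q : List (ℤ × ℤ)) (x : ℤ × ℤ) : ℕ :=
  (Q.zip Q.tail).countP fun s =>
    decide (x.1 < s.1.1) && (decide (x.2 < s.1.2) != decide (x.2 < s.2.2))

variable {Q : List (ℤ × ℤ)} {a b x : ℤ × ℤ}

theorem not_coords_eq_of_mem_zip_tail {s : (ℤ × ℤ) × (ℤ × ℤ)} (hs : s ∈ Q.zip Q.tail) {w : ℤ × ℤ}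
    (hw : w ∉ Q) : ¬ (s.1.1 = w.1 ∧ s.1.2 = w.2) ∧ ¬ (s.2.1 = w.1 ∧ s.2.2 = w.2) :=
  ⟨fun h => hw (Prod.ext h.1 h.2 ▸ (List.mem_of_mem_zip_tail hs).1),
    fun h => hw (Prod.ext h.1 h.2 ▸ (List.mem_of_mem_zip_tail hs).2)⟩

theorem rayCrossings_mod_two_of_lt (ha : Q.head? = some a) (hb : Q.getLast? = some b)
    (hcol : ∀ q ∈ Q, x.1 < q.1) (hax : x.2 < a.2) (hbx : b.2 ≤ x.2) :
    rayCrossings Q x % 2 = 1 := by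
  have hflip := List.countP_bne_zip_tail_mod_two (fun q => decide (x.2 < q.2)) ha hb
  simp only [hax, decide_true, not_lt.mpr hbx, decide_false] at hflip
  rw [show (true != false).toNat = 1 from rfl] at hflip
  rw [rayCrossings, ← hflip]
  congr 1
  refine List.countP_congr fun s hs => ?_
  simp [hcol s.1 (List.mem_of_mem_zip_tail hs).1]

theorem rayCrossings_eq_zero (hcol : ∀ q ∈ Q, q.1 ≤ x.1) : rayCrossings Q x = 0 :=
  List.countP_eq_zero.mpr fun s hs => by
    have := hcol s.1 (List.mem_of_mem_zip_tail hs).1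
    simp only [Bool.and_eq_true, decide_eq_true_eq]
    omega

theorem rayCrossings_succ_fst (hQ : Q.IsChain plusAdj) {c v : ℤ}
    (hw : (c + 1, v) ∉ Q ∨ (c + 1, v + 1) ∉ Q) :
    rayCrossings Q (c + 1, v) = rayCrossings Q (c, v) := by
  refine List.countP_congr fun s hs => ?_
  have hadj := plusAdj_iff.mp (hQ.rel_of_mem_zip_tail hs)
  simp only [Bool.and_eq_true, decide_eq_true_eq, bne_iff_ne, ne_eq, decide_eq_decide]
  rcases hw with hw | hw <;> have := not_coords_eq_of_mem_zip_tail hs hw <;> dsimp only at * <;>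
    omega

-- Apart from horizontal steps between `(c, v)` and `(c + 1, v)`, which `hw` rules out, the steps
-- entering or leaving the half-row `{(c', v) | c < c'}` are the crossings counted at heights
-- `v - 1` and `v`; as `Q` starts and ends outside the half-row, there are evenly many.
theorem rayCrossings_pred_snd_mod_two (hQ : Q.IsChain plusAdj) (ha : Q.head? = some a)
    (hb : Q.getLast? = some b) {c v : ℤ} (hav : a.2 ≠ v) (hbv : b.2 ≠ v)
    (hw : (c, v) ∉ Q ∨ (c + 1, v) ∉ Q) :
    rayCrossings Q (c, v - 1) % 2 = rayCrossings Q (c, v) % 2 := by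
  have hflip := List.countP_bne_zip_tail_mod_two (fun q => decide (q.2 = v ∧ c < q.1)) ha hb
  simp only [hav, hbv, false_and, decide_false, bne_self_eq_false, Bool.toNat_false] at hflip
  rw [List.countP_eq_add_of_disjoint (q := fun s => decide (c < s.1.1) &&
      (decide (v - 1 < s.1.2) != decide (v - 1 < s.2.2))) (r := fun s => decide (c < s.1.1) &&
      (decide (v < s.1.2) != decide (v < s.2.2)))] at hflip
  · rw [rayCrossings, rayCrossings]
    dsimp only
    omega
  all_goals
    intro s hs
    have hadj := plusAdj_iff.mp (hQ.rel_of_mem_zip_tail hs)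
    simp only [Bool.and_eq_true, decide_eq_true_eq, bne_iff_ne, ne_eq, decide_eq_decide]
    rcases hw with hw | hw <;> have := not_coords_eq_of_mem_zip_tail hs hw <;> dsimp only at * <;>
      omega

theorem rayCrossings_mod_two_eq_of_starAdj (hQ : Q.IsChain plusAdj) (ha : Q.head? = some a)
    (hb : Q.getLast? = some b) {y : ℤ × ℤ} (hx : x ∉ Q) (hy : y ∉ Q) (hxa : x.2 < a.2)
    (hya : y.2 < a.2) (hbx : b.2 < x.2) (hby : b.2 < y.2) (hxy : starAdj x y) :
    rayCrossings Q x % 2 = rayCrossings Q y % 2 := by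
  have forward : ∀ x y : ℤ × ℤ, x ∉ Q → y ∉ Q → x.2 < a.2 → y.2 < a.2 → b.2 < x.2 → b.2 < y.2 →
      (y = (x.1 + 1, x.2) ∨ y = (x.1, x.2 + 1) ∨ y = (x.1 + 1, x.2 + 1) ∨
        y = (x.1 + 1, x.2 - 1)) →
      rayCrossings Q x % 2 = rayCrossings Q y % 2 := by
    rintro ⟨c, v⟩ y hx hy hxa hya hbx hby (rfl | rfl | rfl | rfl) <;> dsimp only at *
    · rw [rayCrossings_succ_fst hQ (.inl hy)]
    · have := rayCrossings_pred_snd_mod_two hQ ha hb (c := c) hya.ne' hby.ne (.inl hy)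
      rwa [add_sub_cancel_right] at this
    · have := rayCrossings_pred_snd_mod_two hQ ha hb (c := c + 1) hya.ne' hby.ne (.inl hy)
      rwa [add_sub_cancel_right, rayCrossings_succ_fst hQ (.inr hy)] at this
    · have := rayCrossings_pred_snd_mod_two hQ ha hb (c := c) hxa.ne' hbx.ne (.inl hx)
      rw [← rayCrossings_succ_fst hQ (.inl hy)] at this
      exact this.symm
  obtain ⟨x₁, x₂⟩ := x
  obtain ⟨y₁, y₂⟩ := y
  simp only [starAdj, abs] at hxy
  dsimp only at *
  by_cases hdir : x₁ < y₁ ∨ x₁ = y₁ ∧ x₂ < y₂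
  · exact forward _ _ hx hy hxa hya hbx hby (by simp only [Prod.mk.injEq]; omega)
  · exact (forward _ _ hy hx hya hxa hby hbx (by simp only [Prod.mk.injEq]; omega)).symm

theorem exists_mem_of_isChain_starAdj {m : ℤ} {P Q : List (ℤ × ℤ)} {a b p₀ p₁ : ℤ × ℤ}
    (hQ : Q.IsChain plusAdj) (ha : Q.head? = some a) (hb : Q.getLast? = some b)
    (hQcol : ∀ q ∈ Q, 1 ≤ q.1 ∧ q.1 ≤ m) (hP : P.IsChain starAdj) (hp₀ : P.head? = some p₀)
    (hp₁ : P.getLast? = some p₁) (hp₀col : p₀.1 = 1) (hp₁col : p₁.1 = m)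
    (hProw : ∀ k ∈ P, b.2 < k.2 ∧ k.2 < a.2) : ∃ k ∈ P, k ∈ Q := by
  by_contra! hPQ
  have hconst : ∀ k ∈ P, rayCrossings Q k % 2 = rayCrossings Q p₀ % 2 := by
    refine (List.IsChain.iff_mem.mp hP).induction _ _ ?_ ?_
    · rintro x y ⟨hx, hy, hxy⟩ hpx
      rw [← hpx]
      exact (rayCrossings_mod_two_eq_of_starAdj hQ ha hb (hPQ x hx) (hPQ y hy)
        (hProw x hx).2 (hProw y hy).2 (hProw x hx).1 (hProw y hy).1 hxy).symm
    · intro hne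
      rw [← Option.some_injective _ ((List.head?_eq_some_head hne).symm.trans hp₀)]
  have hp₀P := List.mem_of_mem_head? hp₀
  have hodd : rayCrossings Q p₀ % 2 = 1 := by
    have h := rayCrossings_succ_fst (c := 0) (v := p₀.2) hQ
      (.inl (by rw [zero_add, ← hp₀col]; exact hPQ p₀ hp₀P))
    rw [zero_add, ← hp₀col] at h
    rw [h]
    exact rayCrossings_mod_two_of_lt ha hb (fun q hq => (hQcol q hq).1) (hProw p₀ hp₀P).2
      (hProw p₀ hp₀P).1.le
  have heven : rayCrossings Q p₁ = 0 := rayCrossings_eq_zero fun q hq => hp₁col ▸ (hQcol q hq).2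
  have := hconst p₁ (List.mem_of_mem_getLast? hp₁)
  omega

end RayCrossings

theorem exists_mem_of_isLRCrossing_of_isTDCrossing {m n : ℤ} {P Q : List (ℤ × ℤ)}
    (hP : IsLRCrossing starAdj m n P) (hQ : IsTDCrossing plusAdj m n Q) : ∃ k ∈ P, k ∈ Q := by
  obtain ⟨hPne, -, hPc, hPrect, hPhead, hPlast⟩ := hP
  obtain ⟨hQne, -, hQc, hQrect, hQhead, hQlast⟩ := hQ
  obtain ⟨p₀, hp₀⟩ := List.exists_head?_eq_some hPne
  obtain ⟨p₁, hp₁⟩ := List.exists_getLast?_eq_some hPne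
  obtain ⟨q₀, hq₀⟩ := List.exists_head?_eq_some hQne
  obtain ⟨q₁, hq₁⟩ := List.exists_getLast?_eq_some hQne
  have hq₀Q := List.mem_of_mem_head? hq₀
  have hq₁Q := List.mem_of_mem_getLast? hq₁
  -- the ends of `Q` are moved outside the rows of `Λ`
  set Q' := (q₀.1, n + 1) :: (Q ++ [(q₁.1, 0)]) with hQ'
  have hQ'mem : ∀ q ∈ Q', q = (q₀.1, n + 1) ∨ q ∈ Q ∨ q = (q₁.1, 0) := by simp [Q']
  have hQ'c : Q'.IsChain plusAdj := by
    have hq₀n := (hQhead q₀ hq₀Q).mpr hq₀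
    have hq₁1 := (hQlast q₁ hq₁Q).mpr hq₁
    refine List.isChain_cons.mpr ⟨?_, List.isChain_append.mpr ⟨hQc, .singleton _, ?_⟩⟩
    · simp [List.head?_append, hq₀, plusAdj, hq₀n]
    · simp [hq₁, plusAdj, hq₁1]
  have hQ'col : ∀ q ∈ Q', 1 ≤ q.1 ∧ q.1 ≤ m := by
    intro q hq
    rcases hQ'mem q hq with rfl | hq | rfl
    · exact ⟨(hQrect q₀ hq₀Q).1, (hQrect q₀ hq₀Q).2.1⟩
    · exact ⟨(hQrect q hq).1, (hQrect q hq).2.1⟩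
    · exact ⟨(hQrect q₁ hq₁Q).1, (hQrect q₁ hq₁Q).2.1⟩
  have hQ'last : Q'.getLast? = some (q₁.1, 0) := by simp [Q', List.getLast?_cons]
  obtain ⟨k, hkP, hkQ'⟩ := exists_mem_of_isChain_starAdj hQ'c rfl hQ'last hQ'col hPc hp₀ hp₁
    ((hPhead p₀ (List.mem_of_mem_head? hp₀)).mpr hp₀)
    ((hPlast p₁ (List.mem_of_mem_getLast? hp₁)).mpr hp₁)
    fun k hk => by have := hPrect k hk; unfold inRect at this; dsimp only; omega
  have hk := hPrect k hkP
  rcases hQ'mem k hkQ' with rfl | hkQ | rfl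
  · exact absurd hk.2.2.2 (by simp)
  · exact ⟨k, hkP, hkQ⟩
  · exact absurd hk.2.2.1 (by simp)

section Walk

def rot (d : ℤ × ℤ) : ℤ × ℤ := (-d.2, d.1)

-- An edge `e` separates a vacant square `e.1` from an occupied square `e.2`; `walkStep` moves it
-- one unit in the direction `rot (e.2 - e.1)`, turning so as to keep the occupied squares on its
-- right.
def turn (c : ℤ × ℤ → Bool) (f : ℤ × ℤ) (e : (ℤ × ℤ) × (ℤ × ℤ)) : (ℤ × ℤ) × (ℤ × ℤ) :=
  if c (e.1 + f) then (e.1, e.1 + f)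
  else if c (e.2 + f) then (e.1 + f, e.2 + f) else (e.2 + f, e.2)

def walkStep (c : ℤ × ℤ → Bool) (e : (ℤ × ℤ) × (ℤ × ℤ)) : (ℤ × ℤ) × (ℤ × ℤ) :=
  turn c (rot (e.2 - e.1)) e

def walkBack (c : ℤ × ℤ → Bool) (e : (ℤ × ℤ) × (ℤ × ℤ)) : (ℤ × ℤ) × (ℤ × ℤ) :=
  turn c (rot (e.1 - e.2)) e

def IsBoundaryEdge (c : ℤ × ℤ → Bool) (e : (ℤ × ℤ) × (ℤ × ℤ)) : Prop :=
  c e.1 = false ∧ c e.2 = true ∧ plusAdj e.1 e.2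

variable {c : ℤ × ℤ → Bool} {e : (ℤ × ℤ) × (ℤ × ℤ)}

theorem walkBack_walkStep (h₁ : c e.1 = false) (h₂ : c e.2 = true) :
    walkBack c (walkStep c e) = e := by
  obtain ⟨l, r⟩ := e
  dsimp only at h₁ h₂
  unfold walkStep turn
  dsimp only
  split_ifs with hA hB <;> unfold walkBack <;> dsimp only
  · have hg : rot (l - (l + rot (r - l))) = r - l := by ext <;> simp [rot]
    rw [hg]
    simp [turn, h₂]
  · have hg : rot (l + rot (r - l) - (r + rot (r - l))) = -rot (r - l) := by
      ext <;> simp [rot]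
    rw [hg]
    simp [turn, h₁, h₂]
  · have hg : rot (r + rot (r - l) - r) = l - r := by ext <;> simp [rot]
    have hl : r + rot (r - l) + (l - r) = l + rot (r - l) := by abel
    rw [hg]
    simp [turn, hl, hA, h₁]

theorem isBoundaryEdge_walkStep (h : IsBoundaryEdge c e) : IsBoundaryEdge c (walkStep c e) := by
  obtain ⟨h₁, h₂, hadj⟩ := h
  rw [plusAdj_iff] at hadj
  unfold walkStep turn
  split_ifs with hA hB
  · refine ⟨h₁, hA, plusAdj_iff.mpr ?_⟩
    simp only [rot, Prod.fst_add, Prod.snd_add, Prod.fst_sub, Prod.snd_sub]; omega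
  · refine ⟨by simpa using hA, hB, plusAdj_iff.mpr ?_⟩
    simp only [rot, Prod.fst_add, Prod.snd_add, Prod.fst_sub, Prod.snd_sub]; omega
  · refine ⟨by simpa using hB, h₂, plusAdj_iff.mpr ?_⟩
    simp only [rot, Prod.fst_add, Prod.snd_add, Prod.fst_sub, Prod.snd_sub]; omega

theorem IsBoundaryEdge.walkStep_snd (h : IsBoundaryEdge c e) :
    (walkStep c e).2 = e.2 ∨ starAdj e.2 (walkStep c e).2 := by
  have hadj := plusAdj_iff.mp h.2.2
  unfold walkStep turn
  split_ifs
  · right; simp only [starAdj, abs, rot, Prod.fst_add, Prod.snd_add, Prod.fst_sub, Prod.snd_sub]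
    omega
  · right; simp only [starAdj, abs, rot, Prod.fst_add, Prod.snd_add, Prod.fst_sub, Prod.snd_sub]
    omega
  · left; rfl

-- On a right turn the vacant side moves diagonally, past the vacant square `e.1 + rot (e.2 - e.1)`.
def vacantTrace (c : ℤ × ℤ → Bool) (e : (ℤ × ℤ) × (ℤ × ℤ)) : List (ℤ × ℤ) :=
  if c (e.1 + rot (e.2 - e.1)) then [e.1] else [e.1, e.1 + rot (e.2 - e.1)]

theorem IsBoundaryEdge.isChain_vacantTrace (h : IsBoundaryEdge c e) :
    (vacantTrace c e ++ [(walkStep c e).1]).IsChain fun a b => a = b ∨ plusAdj a b := by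
  have hadj := plusAdj_iff.mp h.2.2
  unfold vacantTrace walkStep turn
  split_ifs <;> simp only [List.cons_append, List.nil_append, List.isChain_cons_cons,
    List.isChain_singleton, and_true, plusAdj_iff, rot, Prod.fst_add, Prod.snd_add, Prod.fst_sub,
    Prod.snd_sub, Prod.ext_iff, true_or, true_and] <;> omega

theorem IsBoundaryEdge.mem_vacantTrace (h : IsBoundaryEdge c e) :
    ∀ x ∈ vacantTrace c e, c x = false ∧ x.1 ≤ e.2.1 + 1 := by
  obtain ⟨h₁, -, hadj⟩ := h
  rw [plusAdj_iff] at hadj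
  unfold vacantTrace
  split_ifs with hA <;> simp only [List.mem_cons, List.not_mem_nil, or_false, forall_eq_or_imp,
    forall_eq, h₁, true_and]
  · omega
  · refine ⟨by omega, by simpa using hA, ?_⟩
    simp only [rot, Prod.fst_add, Prod.snd_sub]
    omega

theorem vacantTrace_head? (c : ℤ × ℤ → Bool) (e : (ℤ × ℤ) × (ℤ × ℤ)) :
    (vacantTrace c e).head? = some e.1 := by
  unfold vacantTrace; split_ifs <;> rfl

end Walk

section BackwardRay

variable {β : Type*} {f : β → β} {S : Set β} {u : ℕ → β}

theorem iterate_ne_of_backward_ray (hS : Set.MapsTo f S S) (hf : Set.InjOn f S)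
    (hu : ∀ j, u j ∈ S) (hfu : ∀ j, f (u (j + 1)) = u j) (hu₀ : ∀ j, u (j + 1) ≠ u 0) :
    ∀ t j, f^[t] (u 0) ≠ u (j + 1) := by
  intro t
  induction t with
  | zero => exact fun j => (hu₀ j).symm
  | succ t ih =>
    intro j h
    rw [Function.iterate_succ_apply', ← hfu (j + 1)] at h
    exact ih (j + 1) (hf (hS.iterate t (hu 0)) (hu _) h)

theorem injective_iterate_of_backward_ray (hS : Set.MapsTo f S S) (hf : Set.InjOn f S)
    (hu : ∀ j, u j ∈ S) (hfu : ∀ j, f (u (j + 1)) = u j) (hu₀ : ∀ j, u (j + 1) ≠ u 0) :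
    Function.Injective fun t => f^[t] (u 0) := by
  have key : ∀ i k, f^[i] (u 0) = f^[i + k] (u 0) → k = 0 := by
    intro i
    induction i with
    | zero =>
      rintro (_ | k) h
      · rfl
      · rw [zero_add, Function.iterate_zero_apply, Function.iterate_succ_apply'] at h
        exact absurd (hf (hu 1) (hS.iterate k (hu 0)) ((hfu 0).trans h)).symm
          (iterate_ne_of_backward_ray hS hf hu hfu hu₀ k 0)
    | succ i ih =>
      intro k h
      rw [Nat.add_right_comm, Function.iterate_succ_apply', Function.iterate_succ_apply'] at h
      exact ih k (hf (hS.iterate i (hu 0)) (hS.iterate (i + k) (hu 0)) h)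
  intro i j h
  rcases le_total i j with hij | hji
  · obtain ⟨k, rfl⟩ := Nat.exists_eq_add_of_le hij
    rw [key i k h, add_zero]
  · obtain ⟨k, rfl⟩ := Nat.exists_eq_add_of_le hji
    rw [key j k h.symm, add_zero]

end BackwardRay

section ExtendedWalk

instance (m n : ℤ) : DecidablePred (inRect m n) := fun k =>
  inferInstanceAs (Decidable (1 ≤ k.1 ∧ k.1 ≤ m ∧ 1 ≤ k.2 ∧ k.2 ≤ n))

variable (m n : ℤ) (ω : ℤ × ℤ → Bool)

def extendConfig (x : ℤ × ℤ) : Bool := decide (x.1 ≤ 0) || decide (inRect m n x ∧ ω x = true)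

def rayEdge (j : ℕ) : (ℤ × ℤ) × (ℤ × ℤ) := ((1, n + 1 + j), (0, n + 1 + j))

def walk (t : ℕ) : (ℤ × ℤ) × (ℤ × ℤ) := (walkStep (extendConfig m n ω))^[t] (rayEdge n 0)

variable {m n ω}

theorem extendConfig_eq_true {x : ℤ × ℤ} :
    extendConfig m n ω x = true ↔ x.1 ≤ 0 ∨ inRect m n x ∧ ω x = true := by
  simp [extendConfig]

theorem extendConfig_eq_false {x : ℤ × ℤ} :
    extendConfig m n ω x = false ↔ 0 < x.1 ∧ (inRect m n x → ω x = false) := by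
  simp [extendConfig]

theorem extendConfig_rayEdge (j : ℕ) :
    extendConfig m n ω (1, n + 1 + j) = false ∧ extendConfig m n ω (0, n + 1 + j) = true :=
  ⟨extendConfig_eq_false.mpr ⟨one_pos, fun h => absurd h.2.2.2 (by simp; omega)⟩,
    extendConfig_eq_true.mpr (.inl le_rfl)⟩

theorem isBoundaryEdge_rayEdge (j : ℕ) : IsBoundaryEdge (extendConfig m n ω) (rayEdge n j) :=
  ⟨(extendConfig_rayEdge j).1, (extendConfig_rayEdge j).2, by simp [rayEdge, plusAdj]⟩

theorem walkStep_rayEdge_succ (j : ℕ) :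
    walkStep (extendConfig m n ω) (rayEdge n (j + 1)) = rayEdge n j := by
  have hj : n + 1 + ((j : ℤ) + 1) + -1 = n + 1 + j := by ring
  simp [walkStep, turn, rayEdge, rot, hj, extendConfig_rayEdge]

theorem mapsTo_walkStep {c : ℤ × ℤ → Bool} :
    Set.MapsTo (walkStep c) {e | IsBoundaryEdge c e} {e | IsBoundaryEdge c e} :=
  fun _ => isBoundaryEdge_walkStep

theorem isBoundaryEdge_walk (t : ℕ) : IsBoundaryEdge (extendConfig m n ω) (walk m n ω t) :=
  mapsTo_walkStep.iterate t (isBoundaryEdge_rayEdge 0)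

theorem walk_succ (t : ℕ) :
    walk m n ω (t + 1) = walkStep (extendConfig m n ω) (walk m n ω t) :=
  Function.iterate_succ_apply' _ t _

theorem injOn_walkStep {c : ℤ × ℤ → Bool} : Set.InjOn (walkStep c) {e | IsBoundaryEdge c e} :=
  Set.LeftInvOn.injOn (f₁' := walkBack c) fun _ he => walkBack_walkStep he.1 he.2.1

theorem walk_ne_rayEdge (t j : ℕ) : walk m n ω t ≠ rayEdge n (j + 1) :=
  iterate_ne_of_backward_ray mapsTo_walkStep injOn_walkStep
    isBoundaryEdge_rayEdge walkStep_rayEdge_succ (fun j h => by simp [rayEdge] at h; omega) t j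

theorem walk_injective : Function.Injective (walk m n ω) :=
  injective_iterate_of_backward_ray mapsTo_walkStep injOn_walkStep
    isBoundaryEdge_rayEdge walkStep_rayEdge_succ (fun j h => by simp [rayEdge] at h; omega)

theorem mem_box_of_isBoundaryEdge {e : (ℤ × ℤ) × (ℤ × ℤ)}
    (he : IsBoundaryEdge (extendConfig m n ω) e) (hr : e.2.1 < m) (hl : 0 < e.1.2) (hray : ∀ j, e ≠ rayEdge n (j + 1)) :
    e ∈ (Finset.Icc 0 m ×ˢ Finset.Icc 0 (n + 1)) ×ˢ (Finset.Icc 0 m ×ˢ Finset.Icc 0 (n + 1)) := by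
  obtain ⟨⟨l₁, l₂⟩, ⟨r₁, r₂⟩⟩ := e
  obtain ⟨h₁, h₂, hadj⟩ := he
  rw [extendConfig_eq_false] at h₁
  rw [extendConfig_eq_true] at h₂
  rw [plusAdj_iff] at hadj
  unfold inRect at h₂
  dsimp only at *
  have htop : r₁ ≤ 0 → r₂ ≤ n + 1 := by
    intro hr₁
    by_contra! htop
    obtain ⟨j, hj⟩ := Int.eq_ofNat_of_zero_le (show 0 ≤ r₂ - n - 2 by omega)
    refine hray j ?_
    simp only [rayEdge, Prod.mk.injEq]
    push_cast
    omega
  simp only [Finset.mem_product, Finset.mem_Icc]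
  omega

theorem exists_walk_exit : ∃ t, m ≤ (walk m n ω t).2.1 ∨ (walk m n ω t).1.2 ≤ 0 := by
  by_contra! h
  exact (Set.infinite_of_injective_forall_mem walk_injective fun t =>
    mem_box_of_isBoundaryEdge (isBoundaryEdge_walk t) (h t).1 (h t).2 (walk_ne_rayEdge t))
    (Finset.finite_toSet _)

end ExtendedWalk

section Existence

variable {m n : ℤ} {ω : ℤ × ℤ → Bool}

theorem IsCrossing.isLRCrossing {adj : ℤ × ℤ → ℤ × ℤ → Prop} {J : List (ℤ × ℤ)}
    (hJ : IsCrossing adj Prod.fst m J) (hrect : ∀ k ∈ J, inRect m n k) : IsLRCrossing adj m n J :=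
  ⟨hJ.1, hJ.2.1, hJ.2.2.1, hrect, hJ.2.2.2.1, hJ.2.2.2.2⟩

theorem IsCrossing.isTDCrossing {adj : ℤ × ℤ → ℤ × ℤ → Prop} {J : List (ℤ × ℤ)}
    (hJ : IsCrossing adj (fun k => n + 1 - k.2) n J) (hrect : ∀ k ∈ J, inRect m n k) :
    IsTDCrossing adj m n J :=
  ⟨hJ.1, hJ.2.1, hJ.2.2.1, hrect,
    fun k hk => (show k.2 = n ↔ n + 1 - k.2 = 1 by omega).trans (hJ.2.2.2.1 k hk),
    fun k hk => (show k.2 = 1 ↔ n + 1 - k.2 = n by omega).trans (hJ.2.2.2.2 k hk)⟩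

theorem exists_occupied_LR_of_walk (hm : 1 ≤ m) {t : ℕ} (ht : m ≤ (walk m n ω t).2.1) :
    ∃ J, IsLRCrossing starAdj m n J ∧ ∀ k ∈ J, ω k = true := by
  set L := (List.range (t + 1)).map fun i => (walk m n ω i).2
  have hL : L.IsChain fun a b => a = b ∨ starAdj a b := by
    rw [List.isChain_map, List.isChain_range_succ]
    intro i _
    rw [walk_succ]
    exact (isBoundaryEdge_walk i).walkStep_snd.imp Eq.symm id
  obtain ⟨J, hJ, hJL⟩ := exists_isCrossing_of_isChain (proj := Prod.fst) (a := (walk m n ω 0).2)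
    (fun a b h => by simp only [starAdj, abs] at h; omega) hm hL
    (by simp [L, List.head?_range]) (by simp [walk, rayEdge])
    ⟨_, List.mem_map.mpr ⟨t, List.mem_range.mpr t.lt_succ_self, rfl⟩, ht⟩
  have hocc : ∀ k ∈ J, inRect m n k ∧ ω k = true := by
    intro k hk
    obtain ⟨hkL, hk1, -⟩ := hJL k hk
    obtain ⟨i, -, rfl⟩ := List.mem_map.mp hkL
    exact (extendConfig_eq_true.mp (isBoundaryEdge_walk i).2.1).resolve_left (by omega)
  exact ⟨J, hJ.isLRCrossing fun k hk => (hocc k hk).1, fun k hk => (hocc k hk).2⟩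

variable (m n ω) in
def vacantPath (t : ℕ) : List (ℤ × ℤ) :=
  (List.range (t + 1)).flatMap fun i => vacantTrace (extendConfig m n ω) (walk m n ω i)

theorem vacantPath_head? (t : ℕ) : (vacantPath m n ω t).head? = some (walk m n ω 0).1 := by
  rw [vacantPath, List.range_succ_eq_map, List.flatMap_cons, List.head?_append, vacantTrace_head?]
  rfl

theorem isChain_vacantPath (t : ℕ) :
    (vacantPath m n ω t).IsChain fun a b => a = b ∨ plusAdj a b := by
  rw [vacantPath, List.flatMap_def, List.isChain_flatten fun h => by
    obtain ⟨i, -, hi⟩ := List.mem_map.mp h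
    simpa [hi] using vacantTrace_head? (extendConfig m n ω) (walk m n ω i)]
  refine ⟨?_, ?_⟩
  · simp only [List.mem_map, List.mem_range]
    rintro _ ⟨i, -, rfl⟩
    exact (isBoundaryEdge_walk i).isChain_vacantTrace.prefix ⟨_, rfl⟩
  · rw [List.isChain_map, List.isChain_range_succ]
    intro i _
    rw [walk_succ, vacantTrace_head?]
    simpa using (List.isChain_append.mp (isBoundaryEdge_walk i).isChain_vacantTrace).2.2

theorem exists_vacant_TD_of_walk (hn : 1 ≤ n) {t : ℕ} (ht : (walk m n ω t).1.2 ≤ 0)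
    (hcol : ∀ i ≤ t, (walk m n ω i).2.1 < m) :
    ∃ J, IsTDCrossing plusAdj m n J ∧ ∀ k ∈ J, ω k = false := by
  obtain ⟨J, hJ, hJL⟩ := exists_isCrossing_of_isChain (proj := fun k => n + 1 - k.2)
    (fun a b h => by rw [plusAdj_iff] at h; omega) hn (isChain_vacantPath t) (vacantPath_head? t)
    (by simp [walk, rayEdge])
    ⟨(walk m n ω t).1, List.mem_flatMap.mpr ⟨t, List.mem_range.mpr t.lt_succ_self,
      List.mem_of_mem_head? (vacantTrace_head? _ _)⟩, by omega⟩
  have hvac : ∀ k ∈ J, inRect m n k ∧ ω k = false := by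
    intro k hk
    obtain ⟨hkL, hk1, hkn⟩ := hJL k hk
    obtain ⟨i, hi, hki⟩ := List.mem_flatMap.mp hkL
    obtain ⟨hck, hkcol⟩ := (isBoundaryEdge_walk i).mem_vacantTrace k hki
    have := hcol i (Nat.lt_succ_iff.mp (List.mem_range.mp hi))
    obtain ⟨hk₀, hkω⟩ := extendConfig_eq_false.mp hck
    have hrect : inRect m n k := ⟨hk₀, by omega, by omega, by omega⟩
    exact ⟨hrect, hkω hrect⟩
  exact ⟨J, hJ.isTDCrossing fun k hk => (hvac k hk).1, fun k hk => (hvac k hk).2⟩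

theorem occupied_star_LR_or_vacant_plus_TD (hm : 1 ≤ m) (hn : 1 ≤ n) :
    (∃ J, IsLRCrossing starAdj m n J ∧ ∀ k ∈ J, ω k = true) ∨
      ∃ J, IsTDCrossing plusAdj m n J ∧ ∀ k ∈ J, ω k = false := by
  classical
  have hexit := exists_walk_exit (m := m) (n := n) (ω := ω)
  by_cases hocc : m ≤ (walk m n ω (Nat.find hexit)).2.1
  · exact .inl (exists_occupied_LR_of_walk hm hocc)
  refine .inr (exists_vacant_TD_of_walk hn ((Nat.find_spec hexit).resolve_left hocc) ?_)
  intro i hi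
  rcases hi.lt_or_eq with hi | rfl
  · exact lt_of_not_ge fun h => Nat.find_min hexit hi (.inl h)
  · exact lt_of_not_ge hocc

end Existence

/-- Exactly one of the following occurs: `Λ` contains an occupied star connected
left-right crossing, or `Λ` contains a vacant plus connected top-down crossing. -/
theorem occupied_star_LR_xor_vacant_plus_TD
    (m n : ℤ) (hm : 1 ≤ m) (hn : 1 ≤ n) (ω : ℤ × ℤ → Bool) :
    Xor' (∃ J : List (ℤ × ℤ), IsLRCrossing starAdj m n J ∧ ∀ k ∈ J, ω k = true)
         (∃ J : List (ℤ × ℤ), IsTDCrossing plusAdj m n J ∧ ∀ k ∈ J, ω k = false) := by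
  refine (xor_iff_or_and_not_and _ _).mpr ⟨occupied_star_LR_or_vacant_plus_TD hm hn, ?_⟩
  rintro ⟨⟨P, hP, hPω⟩, ⟨Q, hQ, hQω⟩⟩
  obtain ⟨k, hkP, hkQ⟩ := exists_mem_of_isLRCrossing_of_isTDCrossing hP hQ
  exact absurd (hQω k hkQ) (by simp [hPω k hkP])
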